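/- Let 0 < α < 1 and let h̄ : ℝ → ℝ be the function defined from h ∈ C(ℝ,ℝ) odd with h(s) ≥ 0 for s ≥ 0 by h̄(s) = s^{p₀} sup_{0<t<s} h(t)/t^{p₀} for s > 0, h̄(0)=0, h̄(-s) = -h̄(s), where p₀ > 1. Then for all s ∈ ℝ: 0 ≤ (p₀+1) H̄(s) ≤ s h̄(s), where H̄(s) = ∫₀^s h̄(t)dt. -/

import Mathlib

open Real Set

/-!
On `(0, ∞)` the ratio `h̄(t) / t^{p₀}` is a supremum over the growing interval `(0, t)`,
hence nondecreasing, so `h̄(t) ≤ t^{p₀} h̄(s) / s^{p₀}` for `0 < t < s`. Integrating over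
`(0, s)` gives `H̄(s) ≤ s h̄(s) / (p₀ + 1)`, and nonnegativity of `h̄` on `[0, ∞)` gives
`H̄(s) ≥ 0`. Negative `s` reduce to `-s`, since `H̄` and `s h̄(s)` are even.
-/

section AmbrosettiRabinowitz

variable {f : ℝ → ℝ}

theorem add_one_mul_integral_le_of_div_rpow_le {p s : ℝ} (hp : -1 < p) (hs : 0 < s)
    (hf : IntervalIntegrable f MeasureTheory.volume 0 s)
    (hratio : ∀ t ∈ Ioo 0 s, f t / t ^ p ≤ f s / s ^ p) :
    (p + 1) * ∫ t in (0:ℝ)..s, f t ≤ s * f s := by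
  set C := f s / s ^ p with hC
  have hp1 : 0 < p + 1 := by linarith
  have hbound : ∫ t in (0:ℝ)..s, f t ≤ ∫ t in (0:ℝ)..s, t ^ p * C :=
    intervalIntegral.integral_mono_on_of_le_Ioo hs.le hf
      ((intervalIntegral.intervalIntegrable_rpow' hp).mul_const C)
      fun t ht => by
        rw [mul_comm]; exact (div_le_iff₀ (rpow_pos_of_pos ht.1 p)).1 (hratio t ht)
  have hcomparison : ∫ t in (0:ℝ)..s, t ^ p * C = s ^ (p + 1) / (p + 1) * C := by
    rw [intervalIntegral.integral_mul_const, integral_rpow (Or.inl hp), zero_rpow hp1.ne', sub_zero]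
  calc (p + 1) * ∫ t in (0:ℝ)..s, f t
      ≤ (p + 1) * (s ^ (p + 1) / (p + 1) * C) := by
        rw [← hcomparison]; exact mul_le_mul_of_nonneg_left hbound hp1.le
    _ = s * f s := by
        have : s ^ p ≠ 0 := (rpow_pos_of_pos hs p).ne'
        rw [rpow_add_one hs.ne', hC]
        field_simp

theorem integral_zero_neg_of_odd (hodd : ∀ x, f (-x) = -f x) (s : ℝ) :
    ∫ t in (0:ℝ)..-s, f t = ∫ t in (0:ℝ)..s, f t := by
  rw [intervalIntegral.integral_symm, ← neg_zero, ← intervalIntegral.integral_comp_neg,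
    neg_zero]
  simp only [hodd, intervalIntegral.integral_neg, neg_neg]

theorem ambrosetti_rabinowitz_of_odd {p : ℝ} (hp : -1 < p) (hf : Continuous f)
    (hodd : ∀ x, f (-x) = -f x) (hnonneg : ∀ t, 0 ≤ t → 0 ≤ f t)
    (hratio : ∀ t s, 0 < t → t ≤ s → f t / t ^ p ≤ f s / s ^ p) (s : ℝ) :
    0 ≤ (p + 1) * ∫ t in (0:ℝ)..s, f t ∧
      (p + 1) * ∫ t in (0:ℝ)..s, f t ≤ s * f s := by
  wlog hs : 0 ≤ s generalizing s
  · have h := this (-s) (by linarith)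
    rwa [integral_zero_neg_of_odd hodd, hodd, neg_mul_neg] at h
  have hp1 : 0 < p + 1 := by linarith
  refine ⟨mul_nonneg hp1.le <| intervalIntegral.integral_nonneg hs fun t ht => hnonneg t ht.1,
    ?_⟩
  rcases hs.eq_or_lt with rfl | hs
  · simp
  exact add_one_mul_integral_le_of_div_rpow_le hp hs (hf.intervalIntegrable 0 s)
    fun t ht => hratio t s ht.1 ht.2.le

end AmbrosettiRabinowitz

section SupRatio

variable {h hbar : ℝ → ℝ} {p : ℝ}

theorem div_rpow_eq_sSup_of_eq_rpow_mul_sSup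
    (hbarpos : ∀ s, 0 < s → hbar s = s ^ p * sSup ((fun t => h t / t ^ p) '' Ioo (0:ℝ) s))
    {s : ℝ} (hs : 0 < s) :
    hbar s / s ^ p = sSup ((fun t => h t / t ^ p) '' Ioo (0:ℝ) s) := by
  rw [hbarpos s hs, mul_div_cancel_left₀ _ (rpow_pos_of_pos hs p).ne']

theorem div_rpow_le_of_eq_rpow_mul_sSup
    (hbarpos : ∀ s, 0 < s → hbar s = s ^ p * sSup ((fun t => h t / t ^ p) '' Ioo (0:ℝ) s))
    (hbdd : ∀ s, 0 < s → BddAbove ((fun t => h t / t ^ p) '' Ioo (0:ℝ) s))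
    {t s : ℝ} (ht : 0 < t) (hts : t ≤ s) :
    hbar t / t ^ p ≤ hbar s / s ^ p := by
  rw [div_rpow_eq_sSup_of_eq_rpow_mul_sSup hbarpos ht,
    div_rpow_eq_sSup_of_eq_rpow_mul_sSup hbarpos (ht.trans_le hts)]
  exact csSup_le_csSup (hbdd s (ht.trans_le hts)) ((nonempty_Ioo.2 ht).image _)
    (image_mono (Ioo_subset_Ioo_right hts))

theorem nonneg_of_eq_rpow_mul_sSup (hpos : ∀ s, 0 ≤ s → 0 ≤ h s) (hbar0 : hbar 0 = 0)
    (hbarpos : ∀ s, 0 < s → hbar s = s ^ p * sSup ((fun t => h t / t ^ p) '' Ioo (0:ℝ) s))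
    (hbdd : ∀ s, 0 < s → BddAbove ((fun t => h t / t ^ p) '' Ioo (0:ℝ) s))
    {s : ℝ} (hs : 0 ≤ s) : 0 ≤ hbar s := by
  rcases hs.eq_or_lt with rfl | hs
  · exact hbar0.ge
  have hmid : s / 2 ∈ Ioo 0 s := ⟨half_pos hs, half_lt_self hs⟩
  have hsup : 0 ≤ sSup ((fun t => h t / t ^ p) '' Ioo (0:ℝ) s) :=
    (div_nonneg (hpos _ hmid.1.le) (rpow_nonneg hmid.1.le p)).trans
      (le_csSup (hbdd s hs) ⟨s / 2, hmid, rfl⟩)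
  rw [hbarpos s hs]
  exact mul_nonneg (rpow_nonneg hs.le p) hsup

end SupRatio

theorem stmt10_general (p₀ : ℝ) (hp₀ : 1 < p₀)
    (h hbar : ℝ → ℝ)
    (hpos : ∀ s, 0 ≤ s → 0 ≤ h s)
    (hbar0 : hbar 0 = 0)
    (hbarpos : ∀ s, 0 < s →
      hbar s = s ^ p₀ * sSup ((fun t => h t / t ^ p₀) '' Ioo (0:ℝ) s))
    (hbarodd : ∀ s, hbar (-s) = - hbar s)
    (hbarc : Continuous hbar)
    (hbdd : ∀ s, 0 < s → BddAbove ((fun t => h t / t ^ p₀) '' Ioo (0:ℝ) s))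
    (Hbar : ℝ → ℝ) (hH : ∀ s, Hbar s = ∫ t in (0:ℝ)..s, hbar t) :
    ∀ s : ℝ, 0 ≤ (p₀ + 1) * Hbar s ∧ (p₀ + 1) * Hbar s ≤ s * hbar s := by
  intro s
  rw [hH]
  exact ambrosetti_rabinowitz_of_odd (by linarith) hbarc hbarodd
    (fun _ => nonneg_of_eq_rpow_mul_sSup hpos hbar0 hbarpos hbdd)
    (fun _ _ => div_rpow_le_of_eq_rpow_mul_sSup hbarpos hbdd) s

/-- Let `h` be continuous, odd, nonnegative on `[0,∞)`, `p₀ > 1`, and let `h̄` be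
defined by `h̄(s) = s^{p₀} sup_{0<t<s} h(t)/t^{p₀}` for `s > 0`, `h̄(0) = 0`, and
oddness, assumed finite and continuous.  Then with `H̄(s) = ∫₀^s h̄`, for all `s`:
`0 ≤ (p₀+1)H̄(s) ≤ s h̄(s)`. -/
theorem stmt10 (α p₀ : ℝ) (hα0 : 0 < α) (hα1 : α < 1) (hp₀ : 1 < p₀)
    (h hbar : ℝ → ℝ)
    (hc : Continuous h) (hodd : ∀ s, h (-s) = - h s)
    (hpos : ∀ s, 0 ≤ s → 0 ≤ h s)
    (hbar0 : hbar 0 = 0)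
    (hbarpos : ∀ s, 0 < s →
      hbar s = s ^ p₀ * sSup ((fun t => h t / t ^ p₀) '' Ioo (0:ℝ) s))
    (hbarodd : ∀ s, hbar (-s) = - hbar s)
    (hbarc : Continuous hbar)
    (hbdd : ∀ s, 0 < s → BddAbove ((fun t => h t / t ^ p₀) '' Ioo (0:ℝ) s))
    (Hbar : ℝ → ℝ) (hH : ∀ s, Hbar s = ∫ t in (0:ℝ)..s, hbar t) :
    ∀ s : ℝ, 0 ≤ (p₀ + 1) * Hbar s ∧ (p₀ + 1) * Hbar s ≤ s * hbar s :=
  stmt10_general p₀ hp₀ h hbar hpos hbar0 hbarpos hbarodd hbarc hbdd Hbar hH
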